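/- Define ς(x,ξ) = x₃ξ₁ + x₄ξ₂ + x₁ξ₃ + x₂ξ₄ and κ(x,ξ) = x₄ξ₁ − x₃ξ₂ − x₂ξ₃ + x₁ξ₄. Let (x(s), ξ(s)) be a C¹ solution of the Hamiltonian system ẋ = ς(x,ξ)·X(x) + κ(x,ξ)·Y(x), ξ̇ = −ς(x,ξ)·X(ξ) − κ(x,ξ)·Y(ξ), with x(0) ∈ H. Then x(s) ∈ H for all s, the curve x is horizontal with respect to span{X,Y} (α ≡ 0 along x), and its horizontal coordinates satisfy β(s) = ς(x(s),ξ(s)) and γ(s) = κ(x(s),ξ(s)) for all s; in particular the Hamiltonian (1/2)(ς² + κ²) equals the energy (1/2)(β² + γ²) along the solution. -/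

import Mathlib

/-! The fields X and Y are tangent to every quadric {⟨x,x⟩ = c} and are ⟨·,·⟩-orthogonal to T
and to each other, with ⟨X x, X x⟩ = ⟨Y x, Y x⟩ = -⟨x,x⟩. Hence along the x-component of a
solution ⟨x,x⟩ is constant, so x stays on H; and pairing ẋ = ς X(x) + κ Y(x) with T, X, Y at a
point of H gives α = 0, β = ς, γ = κ. -/

open Real Set

noncomputable section

/-- Pseudo-Euclidean inner product of signature (2,2) on ℝ⁴. -/
def ip (x y : Fin 4 → ℝ) : ℝ :=
  -(x 0 * y 0) - x 1 * y 1 + x 2 * y 2 + x 3 * y 3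

/-- Anti-de Sitter space H = {x : ⟨x,x⟩ = -1}. -/
def AdS : Set (Fin 4 → ℝ) := {x | ip x x = -1}

/-- The vector field T(x) = (−x₂, x₁, x₄, −x₃). -/
def Tf (x : Fin 4 → ℝ) : Fin 4 → ℝ := ![-(x 1), x 0, x 3, -(x 2)]

/-- The vector field X(x) = (x₃, x₄, x₁, x₂). -/
def Xf (x : Fin 4 → ℝ) : Fin 4 → ℝ := ![x 2, x 3, x 0, x 1]

/-- The vector field Y(x) = (x₄, −x₃, −x₂, x₁). -/
def Yf (x : Fin 4 → ℝ) : Fin 4 → ℝ := ![x 3, -(x 2), -(x 1), x 0]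

/-- The normal vector field N(x) = x. -/
def Nf (x : Fin 4 → ℝ) : Fin 4 → ℝ := x

/-- α(s) = ⟨ċ(s), T(c(s))⟩. -/
def alphaC (c : ℝ → Fin 4 → ℝ) (s : ℝ) : ℝ := ip (deriv c s) (Tf (c s))

/-- β(s) = ⟨ċ(s), X(c(s))⟩. -/
def betaC (c : ℝ → Fin 4 → ℝ) (s : ℝ) : ℝ := ip (deriv c s) (Xf (c s))

/-- γ(s) = ⟨ċ(s), Y(c(s))⟩. -/
def gammaC (c : ℝ → Fin 4 → ℝ) (s : ℝ) : ℝ := ip (deriv c s) (Yf (c s))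

/-- ς(x,ξ) = x₃ξ₁ + x₄ξ₂ + x₁ξ₃ + x₂ξ₄. -/
def sigmaF (x ξ : Fin 4 → ℝ) : ℝ :=
  x 2 * ξ 0 + x 3 * ξ 1 + x 0 * ξ 2 + x 1 * ξ 3

/-- κ(x,ξ) = x₄ξ₁ − x₃ξ₂ − x₂ξ₃ + x₁ξ₄. -/
def kappaF (x ξ : Fin 4 → ℝ) : ℝ :=
  x 3 * ξ 0 - x 2 * ξ 1 - x 1 * ξ 2 + x 0 * ξ 3

theorem ip_comm (u v : Fin 4 → ℝ) : ip u v = ip v u := by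
  simp only [ip]; ring

theorem ip_smul_add_left (a b : ℝ) (u v w : Fin 4 → ℝ) :
    ip (a • u + b • v) w = a * ip u w + b * ip v w := by
  simp only [ip, Pi.add_apply, Pi.smul_apply, smul_eq_mul]; ring

section FieldIdentities

variable (x : Fin 4 → ℝ)

theorem ip_self_Xf : ip x (Xf x) = 0 := by
  simp only [ip, Xf, Matrix.cons_val_zero, Matrix.cons_val_one, Matrix.cons_val]; ring

theorem ip_self_Yf : ip x (Yf x) = 0 := by
  simp only [ip, Yf, Matrix.cons_val_zero, Matrix.cons_val_one, Matrix.cons_val]; ring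

theorem ip_Xf_Tf : ip (Xf x) (Tf x) = 0 := by
  simp only [ip, Xf, Tf, Matrix.cons_val_zero, Matrix.cons_val_one, Matrix.cons_val]; ring

theorem ip_Yf_Tf : ip (Yf x) (Tf x) = 0 := by
  simp only [ip, Yf, Tf, Matrix.cons_val_zero, Matrix.cons_val_one, Matrix.cons_val]; ring

theorem ip_Xf_Yf : ip (Xf x) (Yf x) = 0 := by
  simp only [ip, Xf, Yf, Matrix.cons_val_zero, Matrix.cons_val_one, Matrix.cons_val]; ring

theorem ip_Xf_Xf : ip (Xf x) (Xf x) = -ip x x := by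
  simp only [ip, Xf, Matrix.cons_val_zero, Matrix.cons_val_one, Matrix.cons_val]; ring

theorem ip_Yf_Yf : ip (Yf x) (Yf x) = -ip x x := by
  simp only [ip, Yf, Matrix.cons_val_zero, Matrix.cons_val_one, Matrix.cons_val]; ring

end FieldIdentities

theorem HasDerivAt.ip {c d : ℝ → Fin 4 → ℝ} {c' d' : Fin 4 → ℝ} {s : ℝ}
    (hc : HasDerivAt c c' s) (hd : HasDerivAt d d' s) :
    HasDerivAt (fun t => ip (c t) (d t)) (ip c' (d s) + ip (c s) d') s := by
  have hc := hasDerivAt_pi.1 hc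
  have hd := hasDerivAt_pi.1 hd
  exact ((((hc 0).fun_mul (hd 0)).fun_neg.fun_sub ((hc 1).fun_mul (hd 1))).fun_add
    ((hc 2).fun_mul (hd 2))).fun_add ((hc 3).fun_mul (hd 3)) |>.congr_deriv
    (by simp only [_root_.ip]; ring)

theorem ip_self_eq_of_horizontal_flow {c : ℝ → Fin 4 → ℝ} {a b : ℝ → ℝ}
    (hc : ∀ s, HasDerivAt c (a s • Xf (c s) + b s • Yf (c s)) s) (s : ℝ) :
    ip (c s) (c s) = ip (c 0) (c 0) := by
  have hderiv : ∀ t, HasDerivAt (fun t => ip (c t) (c t)) 0 t := by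
    intro t
    convert (hc t).ip (hc t) using 1
    rw [ip_comm (c t), ← two_mul, ip_smul_add_left, ip_comm _ (c t), ip_comm _ (c t),
      ip_self_Xf, ip_self_Yf]
    ring
  exact is_const_of_deriv_eq_zero (fun t => (hderiv t).differentiableAt)
    (fun t => (hderiv t).deriv) s 0

section HorizontalVector

variable (a b : ℝ) {x : Fin 4 → ℝ}

theorem ip_horizontal_Tf : ip (a • Xf x + b • Yf x) (Tf x) = 0 := by
  rw [ip_smul_add_left, ip_Xf_Tf, ip_Yf_Tf]; ring

theorem ip_horizontal_Xf_of_mem_AdS (hx : x ∈ AdS) : ip (a • Xf x + b • Yf x) (Xf x) = a := by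
  rw [ip_smul_add_left, ip_Xf_Xf, ip_comm (Yf x), ip_Xf_Yf, show ip x x = -1 from hx]; ring

theorem ip_horizontal_Yf_of_mem_AdS (hx : x ∈ AdS) : ip (a • Xf x + b • Yf x) (Yf x) = b := by
  rw [ip_smul_add_left, ip_Yf_Yf, ip_Xf_Yf, show ip x x = -1 from hx]; ring

end HorizontalVector

theorem subRiemannian_hamiltonian_solutions_general (x ξ : ℝ → Fin 4 → ℝ)
    (hx : ∀ s, HasDerivAt x
      ((sigmaF (x s) (ξ s)) • Xf (x s) + (kappaF (x s) (ξ s)) • Yf (x s)) s)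
    (h0 : x 0 ∈ AdS) :
    ∀ s, x s ∈ AdS ∧ alphaC x s = 0 ∧
      betaC x s = sigmaF (x s) (ξ s) ∧ gammaC x s = kappaF (x s) (ξ s) ∧
      (1/2 : ℝ) * ((sigmaF (x s) (ξ s))^2 + (kappaF (x s) (ξ s))^2)
        = (1/2 : ℝ) * ((betaC x s)^2 + (gammaC x s)^2) := by
  intro s
  have hmem : x s ∈ AdS := (ip_self_eq_of_horizontal_flow hx s).trans h0
  have hd := (hx s).deriv
  have hβ : betaC x s = sigmaF (x s) (ξ s) := by
    rw [betaC, hd, ip_horizontal_Xf_of_mem_AdS _ _ hmem]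
  have hγ : gammaC x s = kappaF (x s) (ξ s) := by
    rw [gammaC, hd, ip_horizontal_Yf_of_mem_AdS _ _ hmem]
  exact ⟨hmem, by rw [alphaC, hd, ip_horizontal_Tf], hβ, hγ, by rw [hβ, hγ]⟩

/-- solutions of the sub-Riemannian Hamiltonian system
ẋ = ς·X(x) + κ·Y(x), ξ̇ = −ς·X(ξ) − κ·Y(ξ) starting on AdS stay on AdS, are
horizontal with respect to span{X,Y}, and have β = ς, γ = κ; in particular the
Hamiltonian (1/2)(ς² + κ²) equals the energy (1/2)(β² + γ²) along the solution. -/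
theorem subRiemannian_hamiltonian_solutions (x ξ : ℝ → Fin 4 → ℝ)
    (hx : ∀ s, HasDerivAt x
      ((sigmaF (x s) (ξ s)) • Xf (x s) + (kappaF (x s) (ξ s)) • Yf (x s)) s)
    (hξ : ∀ s, HasDerivAt ξ
      ((-(sigmaF (x s) (ξ s))) • Xf (ξ s) + (-(kappaF (x s) (ξ s))) • Yf (ξ s)) s)
    (h0 : x 0 ∈ AdS) :
    ∀ s, x s ∈ AdS ∧ alphaC x s = 0 ∧
      betaC x s = sigmaF (x s) (ξ s) ∧ gammaC x s = kappaF (x s) (ξ s) ∧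
      (1/2 : ℝ) * ((sigmaF (x s) (ξ s))^2 + (kappaF (x s) (ξ s))^2)
        = (1/2 : ℝ) * ((betaC x s)^2 + (gammaC x s)^2) :=
  subRiemannian_hamiltonian_solutions_general x ξ hx h0
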